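/- The function p_2(r) = e^{10r} + 2 e^{-5r} cos(5√3 r) − 3 satisfies p_2(0)=p_2'(0)=p_2''(0)=0 and p_2'''(r) > 0 for all r ∈ [0,1]; consequently p_2(r) > 0 for all r ∈ (0,1]. -/

import Mathlib

/-!
Every function `A e^{λr} + e^{αr} (B cos βr + C sin βr) + D` differentiates to one of the same
shape, with `(A, B, C)` transformed linearly and `D` replaced by `0`. Three steps turn `p₂` into
`p₂''' = 1000 e^{-5r} (e^{15r} + 2 cos (5√3 r))`, which is positive for `r ≥ 0` because
`e^{3x} ≥ 1 + 3x + 9x²/2` and `2 cos (√3 x) ≥ 2 - 3x²`. Since `p₂`, `p₂'`, `p₂''` vanish at `0`,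
the mean value theorem passes positivity on `(0, ∞)` from each derivative down to the function.
-/

open Real Set

noncomputable def expCosSin (l α β A B C D r : ℝ) : ℝ :=
  A * exp (l * r) + exp (α * r) * (B * cos (β * r) + C * sin (β * r)) + D

theorem hasDerivAt_expCosSin {l α β A B C D A' B' C' : ℝ} (r : ℝ) (hA : A' = l * A)
    (hB : B' = α * B + β * C) (hC : C' = α * C - β * B) :
    HasDerivAt (expCosSin l α β A B C D) (expCosSin l α β A' B' C' 0 r) r := by
  have hlin (c : ℝ) : HasDerivAt (fun r : ℝ => c * r) c r := by
    simpa using (hasDerivAt_id r).const_mul c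
  have h := (((hlin l).exp.const_mul A).add ((hlin α).exp.mul
    (((hlin β).cos.const_mul B).add ((hlin β).sin.const_mul C)))).add_const D
  refine h.congr_deriv ?_
  simp only [expCosSin, Pi.add_apply, hA, hB, hC]
  ring

theorem pos_of_hasDerivAt_of_pos {f f' : ℝ → ℝ} {a x : ℝ} (hf : ∀ y, HasDerivAt f (f' y) y)
    (ha : f a = 0) (hf' : ∀ y, a < y → 0 < f' y) (hx : a < x) : 0 < f x := by
  obtain ⟨c, hc, hslope⟩ := exists_hasDerivAt_eq_slope f f' hx
    (fun y _ => (hf y).continuousAt.continuousWithinAt) (fun y _ => hf y)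
  rw [ha, sub_zero, eq_div_iff (sub_ne_zero.mpr hx.ne')] at hslope
  rw [← hslope]
  exact mul_pos (hf' c hc.1) (sub_pos.mpr hx)

theorem exp_three_mul_add_two_mul_cos_pos {x : ℝ} (hx : 0 ≤ x) :
    0 < exp (3 * x) + 2 * cos (√3 * x) := by
  have hexp := quadratic_le_exp_of_nonneg (by positivity : 0 ≤ 3 * x)
  have hcos := one_sub_sq_div_two_le_cos (x := √3 * x)
  rw [mul_pow, sq_sqrt (by norm_num : (0 : ℝ) ≤ 3)] at hcos
  nlinarith

noncomputable def p₂ : ℝ → ℝ := expCosSin 10 (-5) (5 * √3) 1 2 0 (-3)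
noncomputable def p₂' : ℝ → ℝ := expCosSin 10 (-5) (5 * √3) 10 (-10) (-10 * √3) 0
noncomputable def p₂'' : ℝ → ℝ := expCosSin 10 (-5) (5 * √3) 100 (-100) (100 * √3) 0
noncomputable def p₂''' : ℝ → ℝ := expCosSin 10 (-5) (5 * √3) 1000 2000 0 0

theorem hasDerivAt_p₂ (r : ℝ) : HasDerivAt p₂ (p₂' r) r :=
  hasDerivAt_expCosSin r (by norm_num) (by norm_num) (by ring)

theorem hasDerivAt_p₂' (r : ℝ) : HasDerivAt p₂' (p₂'' r) r :=
  hasDerivAt_expCosSin r (by norm_num)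
    (by linear_combination 50 * mul_self_sqrt (by norm_num : (0 : ℝ) ≤ 3)) (by ring)

theorem hasDerivAt_p₂'' (r : ℝ) : HasDerivAt p₂'' (p₂''' r) r :=
  hasDerivAt_expCosSin r (by norm_num)
    (by linear_combination -500 * mul_self_sqrt (by norm_num : (0 : ℝ) ≤ 3)) (by ring)

theorem p₂'''_pos {r : ℝ} (hr : 0 ≤ r) : 0 < p₂''' r := by
  have hsplit : exp (10 * r) = exp (-5 * r) * exp (3 * (5 * r)) := by
    rw [← exp_add]; ring_nf
  have hfactor : p₂''' r =
      1000 * exp (-5 * r) * (exp (3 * (5 * r)) + 2 * cos (√3 * (5 * r))) := by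
    simp only [p₂''', expCosSin, hsplit]; ring_nf
  rw [hfactor]
  have := exp_three_mul_add_two_mul_cos_pos (mul_nonneg (by norm_num : (0 : ℝ) ≤ 5) hr)
  positivity

theorem p₂''_pos {r : ℝ} (hr : 0 < r) : 0 < p₂'' r :=
  pos_of_hasDerivAt_of_pos hasDerivAt_p₂'' (by norm_num [p₂'', expCosSin])
    (fun _ hy => p₂'''_pos hy.le) hr

theorem p₂'_pos {r : ℝ} (hr : 0 < r) : 0 < p₂' r :=
  pos_of_hasDerivAt_of_pos hasDerivAt_p₂' (by norm_num [p₂', expCosSin]) (fun _ => p₂''_pos) hr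

theorem p₂_pos {r : ℝ} (hr : 0 < r) : 0 < p₂ r :=
  pos_of_hasDerivAt_of_pos hasDerivAt_p₂ (by norm_num [p₂, expCosSin]) (fun _ => p₂'_pos) hr

/-- `p₂(r) = e^{10r} + 2 e^{-5r} cos(5√3 r) − 3` vanishes to order 3 at 0,
has positive third derivative on `[0,1]`, and hence is positive on `(0,1]`. -/
theorem stmt_5 :
    let p : ℝ → ℝ := fun r => exp (10 * r) + 2 * exp (-5 * r) * cos (5 * Real.sqrt 3 * r) - 3
    p 0 = 0 ∧ deriv p 0 = 0 ∧ iteratedDeriv 2 p 0 = 0 ∧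
    (∀ r ∈ Icc (0 : ℝ) 1, 0 < iteratedDeriv 3 p r) ∧
    (∀ r ∈ Ioc (0 : ℝ) 1, 0 < p r) := by
  intro p
  have hp : p = p₂ := by funext r; simp only [p, p₂, expCosSin]; ring
  have d₁ : deriv p = p₂' := hp ▸ funext fun r => (hasDerivAt_p₂ r).deriv
  have d₂ : iteratedDeriv 2 p = p₂'' := by
    rw [iteratedDeriv_succ, iteratedDeriv_one, d₁]
    exact funext fun r => (hasDerivAt_p₂' r).deriv
  have d₃ : iteratedDeriv 3 p = p₂''' := by
    rw [iteratedDeriv_succ, d₂]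
    exact funext fun r => (hasDerivAt_p₂'' r).deriv
  exact ⟨by norm_num [p], by norm_num [d₁, p₂', expCosSin], by norm_num [d₂, p₂'', expCosSin],
    fun r hr => d₃ ▸ p₂'''_pos hr.1, fun r hr => hp ▸ p₂_pos hr.1⟩
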